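/- arXiv:1903.07344 — 3 statements merged into one kernel-verified Lean document; each statement's English description precedes it below -/
import Mathlib

section
/- Let Γ = (V, E) be a finite connected graph with boundary regions A, B and let σ_min ⊆ E be a minimum A–B edge cut of size m. For any labeling {π_v}_{v ∈ V} of the vertices by elements of S_N with π_v = id for v adjacent to A and π_v = F (a fixed N-cycle) for v adjacent to B, the total 'face number' Ω̃({π_v}) := ∑_{(u,v) ∈ E} χ(π_u⁻¹ π_v) satisfies Ω̃ ≤ N|E| − m(N − 1). -/
/-!
Let `ℓ(g)` be the least number of transpositions whose product is `g`. Then `ℓ` is subadditive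
and `ℓ(g) ≤ N - χ(g)`, while an `N`-cycle has `ℓ(F) ≥ N - 1`. Hence `f(v) = ℓ(π_v)` vanishes on
`A`, is at least `N - 1` on `B`, and changes along an edge `uv` by at most `N - χ(π_u⁻¹ π_v)`.
For every level `t < N - 1` the edges crossing from `{f ≤ t}` to `{f > t}` form an `A`–`B` cut,
so there are at least `m` of them; an edge crosses at most `N - χ` levels, and summing over the
levels gives `m (N - 1) ≤ ∑_e (N - χ_e)`.
-/

def numCycles {N : ℕ} (π : Equiv.Perm (Fin N)) : ℕ :=
  N - π.cycleType.sum + Multiset.card π.cycleType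

/-- The face count `χ(π_u⁻¹ π_v)` of an unordered edge `{u, v}`. -/
def numCyclesLift {N : ℕ} {V : Type*} (π : V → Equiv.Perm (Fin N)) : Sym2 V → ℕ :=
  Sym2.lift ⟨fun u v => numCycles ((π u)⁻¹ * π v), fun u v => by
    have h : (π v)⁻¹ * π u = ((π u)⁻¹ * π v)⁻¹ := by group
    show numCycles ((π u)⁻¹ * π v) = numCycles ((π v)⁻¹ * π u)
    rw [numCycles, numCycles, h, Equiv.Perm.cycleType_inv]⟩

/-- `σ` is an `A`–`B` edge cut: a set of edges of `G` such that every walk from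
`A` to `B` uses an edge of `σ`. -/
def IsEdgeCut {V : Type*} (G : SimpleGraph V) (A B : Set V)
    (σ : Finset (Sym2 V)) : Prop :=
  ↑σ ⊆ G.edgeSet ∧ ∀ a ∈ A, ∀ b ∈ B, ∀ w : G.Walk a b, ∃ e ∈ w.edges, e ∈ σ

/-- `σ` is a minimum `A`–`B` edge cut. -/
def IsMinEdgeCut {V : Type*} (G : SimpleGraph V) (A B : Set V)
    (σ : Finset (Sym2 V)) : Prop :=
  IsEdgeCut G A B σ ∧ ∀ σ' : Finset (Sym2 V), IsEdgeCut G A B σ' → σ.card ≤ σ'.card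

open scoped Classical in
/-- The labeling assigning `id` to vertices reachable from `A` after deleting the
cut edges `σ`, and `F` to all other vertices. -/
noncomputable def cutLabel {V : Type*} {N : ℕ} (G : SimpleGraph V)
    (σ : Finset (Sym2 V)) (A : Set V) (F : Equiv.Perm (Fin N)) :
    V → Equiv.Perm (Fin N) :=
  fun v => if ∃ a ∈ A, (G.deleteEdges ↑σ).Reachable a v then 1 else F

open Finset

namespace Equiv.Perm

lemma SameCycle.reachable {α : Type*} [Finite α] {G : SimpleGraph α} {g : Perm α}
    (hg : ∀ x, G.Reachable x (g x)) {x y : α} (h : g.SameCycle x y) : G.Reachable x y := by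
  obtain ⟨n, rfl⟩ := h.exists_nat_pow_eq
  clear h
  induction n with
  | zero => rfl
  | succ n ih => rw [pow_succ', mul_apply]; exact ih.trans (hg _)

variable {α : Type*} [DecidableEq α]

def swapProd (l : List (α × α)) : Perm α :=
  (l.map (Function.uncurry swap)).prod

@[simp]
lemma swapProd_nil : swapProd ([] : List (α × α)) = 1 := rfl

@[simp]
lemma swapProd_cons (p : α × α) (l : List (α × α)) :
    swapProd (p :: l) = swap p.1 p.2 * swapProd l := rfl

@[simp]
lemma swapProd_append (l₁ l₂ : List (α × α)) :
    swapProd (l₁ ++ l₂) = swapProd l₁ * swapProd l₂ := by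
  simp [swapProd]

lemma _root_.List.formPerm_eq_swapProd (l : List α) : l.formPerm = swapProd (l.zip l.tail) := by
  rw [swapProd, List.map_uncurry_zip_eq_zipWith, List.formPerm]

noncomputable def swapLength (g : Perm α) : ℕ :=
  sInf {k | ∃ l : List (α × α), l.length = k ∧ swapProd l = g}

lemma swapLength_le {g : Perm α} {l : List (α × α)} (h : swapProd l = g) :
    swapLength g ≤ l.length :=
  Nat.sInf_le ⟨l, rfl, h⟩

@[simp]
lemma swapLength_one : swapLength (1 : Perm α) = 0 :=
  Nat.eq_zero_of_le_zero (swapLength_le swapProd_nil)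

section Fintype

variable [Fintype α]

lemma exists_swapProd_eq_and_length_add_card_cycleType_eq (g : Perm α) :
    ∃ l : List (α × α), swapProd l = g ∧ l.length + Multiset.card g.cycleType = #g.support := by
  induction g using cycle_induction_on with
  | base_one => exact ⟨[], rfl, by simp⟩
  | base_cycles σ hσ =>
    obtain ⟨x, hx, -⟩ := id hσ
    have hlen : (σ.toList x).length = #σ.support := by
      rw [length_toList, hσ.cycleOf_eq hx]
    refine ⟨(σ.toList x).zip (σ.toList x).tail, ?_, ?_⟩
    · rw [← List.formPerm_eq_swapProd, formPerm_toList, hσ.cycleOf_eq hx]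
    · have hpos : 0 < #σ.support := card_pos.mpr ⟨x, mem_support.mpr hx⟩
      simp only [List.length_zip, List.length_tail, hlen, hσ.cycleType, Multiset.card_singleton]
      omega
  | induction_disjoint σ τ hd _ hσ hτ =>
    obtain ⟨l₁, rfl, h₁⟩ := hσ
    obtain ⟨l₂, rfl, h₂⟩ := hτ
    refine ⟨l₁ ++ l₂, swapProd_append l₁ l₂, ?_⟩
    rw [List.length_append, hd.cycleType_mul, Multiset.card_add, hd.card_support_mul]
    omega

lemma exists_swapProd_eq_and_length_eq_swapLength (g : Perm α) :
    ∃ l : List (α × α), swapProd l = g ∧ l.length = swapLength g := by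
  obtain ⟨l, hl, -⟩ := exists_swapProd_eq_and_length_add_card_cycleType_eq g
  obtain ⟨l', hlen, hl'⟩ :=
    Nat.sInf_mem (s := {k | ∃ l : List (α × α), l.length = k ∧ swapProd l = g}) ⟨_, l, rfl, hl⟩
  exact ⟨l', hl', hlen⟩

lemma swapLength_add_card_cycleType_le (g : Perm α) :
    swapLength g + Multiset.card g.cycleType ≤ #g.support := by
  obtain ⟨l, hl, hlen⟩ := exists_swapProd_eq_and_length_add_card_cycleType_eq g
  have := swapLength_le hl
  omega

lemma swapLength_mul_le (g h : Perm α) : swapLength (g * h) ≤ swapLength g + swapLength h := by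
  obtain ⟨l₁, rfl, h₁⟩ := exists_swapProd_eq_and_length_eq_swapLength g
  obtain ⟨l₂, rfl, h₂⟩ := exists_swapProd_eq_and_length_eq_swapLength h
  simpa [h₁, h₂] using swapLength_le (swapProd_append l₁ l₂)

end Fintype

lemma reachable_swapProd_apply {G : SimpleGraph α} {l : List (α × α)}
    (hl : ∀ p ∈ l, G.Reachable p.1 p.2) (x : α) : G.Reachable x (swapProd l x) := by
  induction l generalizing x with
  | nil => rfl
  | cons p l ih =>
    refine (ih (fun q hq => hl q (List.mem_cons_of_mem p hq)) x).trans ?_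
    have hp := hl p List.mem_cons_self
    rw [swapProd_cons, mul_apply]
    set y := swapProd l x
    rcases eq_or_ne y p.1 with hy | hy
    · rw [hy, swap_apply_left]; exact hp
    rcases eq_or_ne y p.2 with hy' | hy'
    · rw [hy', swap_apply_right]; exact hp.symm
    rw [swap_apply_of_ne_of_ne hy hy']

/-- A full cycle factored into `k` transpositions: the transposed pairs form a connected graph
on `α`, which therefore has at most `k` edges. -/
lemma card_le_length_add_one_of_isCycle [Fintype α] {l : List (α × α)}
    (hc : (swapProd l).IsCycle) (hs : (swapProd l).support = univ) :
    Fintype.card α ≤ l.length + 1 := by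
  let G := SimpleGraph.fromEdgeSet ((l.map fun p => s(p.1, p.2)).toFinset : Set (Sym2 α))
  have hreach : ∀ x, G.Reachable x (swapProd l x) := reachable_swapProd_apply fun p hp => by
    rcases eq_or_ne p.1 p.2 with h | h
    · rw [h]
    · exact SimpleGraph.Adj.reachable ⟨List.mem_toFinset.mpr (List.mem_map_of_mem hp), h⟩
  have hconn : G.Connected := by
    obtain ⟨x, hx, -⟩ := id hc
    refine @SimpleGraph.Connected.mk _ _ (fun y z => ?_) ⟨x⟩
    have hmem : ∀ w, swapProd l w ≠ w := fun w => mem_support.mp (hs ▸ mem_univ w)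
    exact SameCycle.reachable hreach (hc.sameCycle (hmem y) (hmem z))
  calc Fintype.card α = Nat.card α := Nat.card_eq_fintype_card.symm
    _ ≤ Nat.card G.edgeSet + 1 := hconn.card_vert_le_card_edgeSet_add_one
    _ ≤ Nat.card ((l.map fun p => s(p.1, p.2)).toFinset : Set (Sym2 α)) + 1 := by
      gcongr
      exact Nat.card_mono (Finset.finite_toSet _) (by simp [G, SimpleGraph.edgeSet_fromEdgeSet])
    _ ≤ l.length + 1 := by
      rw [Nat.card_coe_set_eq, Set.ncard_coe_finset]
      simpa using List.toFinset_card_le (l.map fun p => s(p.1, p.2))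

lemma IsCycle.card_le_swapLength_add_one [Fintype α] {g : Perm α} (hc : g.IsCycle)
    (hs : g.support = univ) : Fintype.card α ≤ swapLength g + 1 := by
  obtain ⟨l, rfl, hlen⟩ := exists_swapProd_eq_and_length_eq_swapLength g
  exact hlen ▸ card_le_length_add_one_of_isCycle hc hs

end Equiv.Perm

open Equiv.Perm

lemma swapLength_add_numCycles_le {N : ℕ} (g : Equiv.Perm (Fin N)) :
    swapLength g + numCycles g ≤ N := by
  have h := swapLength_add_card_cycleType_le g
  have hN : #g.support ≤ N := by simpa using card_le_univ g.support
  rw [numCycles, sum_cycleType]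
  omega

lemma swapLength_le_add_sub_numCycles {N : ℕ} (g h : Equiv.Perm (Fin N)) :
    swapLength h ≤ swapLength g + (N - numCycles (g⁻¹ * h)) :=
  calc swapLength h = swapLength (g * (g⁻¹ * h)) := by rw [mul_inv_cancel_left]
    _ ≤ swapLength g + swapLength (g⁻¹ * h) := swapLength_mul_le _ _
    _ ≤ swapLength g + (N - numCycles (g⁻¹ * h)) := by
      have := swapLength_add_numCycles_le (g⁻¹ * h)
      omega

namespace SimpleGraph

variable {V : Type*}

def CrossesLevel (f : V → ℕ) (t : ℕ) (e : Sym2 V) : Prop :=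
  ∃ u ∈ e, ∃ v ∈ e, f u ≤ t ∧ t < f v

lemma Walk.exists_mem_edges_crossesLevel {G : SimpleGraph V} (f : V → ℕ) {t : ℕ} {u v : V}
    (w : G.Walk u v) (hu : f u ≤ t) (hv : t < f v) : ∃ e ∈ w.edges, CrossesLevel f t e := by
  induction w with
  | nil => omega
  | @cons u x v h p ih =>
    by_cases hx : f x ≤ t
    · obtain ⟨e, he, hcross⟩ := ih hx hv
      exact ⟨e, by simp [he], hcross⟩
    · exact ⟨s(u, x), by simp, u, Sym2.mem_mk_left u x, x, Sym2.mem_mk_right u x, hu, by omega⟩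

end SimpleGraph

open SimpleGraph

section LevelCuts

variable {V : Type*}

open scoped Classical in
lemma isEdgeCut_filter_crossesLevel (G : SimpleGraph V) [Fintype G.edgeSet] {A B : Set V}
    {f : V → ℕ} {t : ℕ} (hA : ∀ a ∈ A, f a ≤ t) (hB : ∀ b ∈ B, t < f b) :
    IsEdgeCut G A B (G.edgeFinset.filter (CrossesLevel f t)) := by
  refine ⟨fun e he => mem_edgeFinset.mp (Finset.mem_filter.mp he).1, fun a ha b hb w => ?_⟩
  obtain ⟨e, he, hcross⟩ := w.exists_mem_edges_crossesLevel f (hA a ha) (hB b hb)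
  exact ⟨e, he, Finset.mem_filter.mpr ⟨mem_edgeFinset.mpr (w.edges_subset_edgeSet he), hcross⟩⟩

open scoped Classical in
lemma card_filter_crossesLevel_le {f : V → ℕ} {w : ℕ} {e : Sym2 V}
    (he : ∀ u ∈ e, ∀ v ∈ e, f v ≤ f u + w) (k : ℕ) :
    #{t ∈ range k | CrossesLevel f t e} ≤ w := by
  induction e using Sym2.ind with | _ u v =>
  have huv := he u (Sym2.mem_mk_left u v) v (Sym2.mem_mk_right u v)
  have hvu := he v (Sym2.mem_mk_right u v) u (Sym2.mem_mk_left u v)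
  have hsub : {t ∈ range k | CrossesLevel f t s(u, v)} ⊆
      Ico (min (f u) (f v)) (max (f u) (f v)) := by
    intro t ht
    obtain ⟨x, hx, y, hy, hxt, hty⟩ := (Finset.mem_filter.mp ht).2
    rw [Sym2.mem_iff] at hx hy
    rw [mem_Ico]
    rcases hx with rfl | rfl <;> rcases hy with rfl | rfl <;> omega
  calc _ ≤ #(Ico (min (f u) (f v)) (max (f u) (f v))) := card_le_card hsub
    _ ≤ w := by rw [Nat.card_Ico]; omega

theorem IsMinEdgeCut.card_mul_le_sum {G : SimpleGraph V} [Fintype G.edgeSet] {A B : Set V}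
    {σ : Finset (Sym2 V)} (hσ : IsMinEdgeCut G A B σ) {f : V → ℕ} {k : ℕ}
    (hA : ∀ a ∈ A, f a = 0) (hB : ∀ b ∈ B, k ≤ f b) (w : Sym2 V → ℕ)
    (hw : ∀ u v, G.Adj u v → f v ≤ f u + w s(u, v)) :
    #σ * k ≤ ∑ e ∈ G.edgeFinset, w e := by
  classical
  calc #σ * k = ∑ _t ∈ range k, #σ := by simp [mul_comm]
    _ ≤ ∑ t ∈ range k, #(G.edgeFinset.filter (CrossesLevel f t)) :=
      sum_le_sum fun t ht => hσ.2 _ <| isEdgeCut_filter_crossesLevel G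
        (fun a ha => by simp [hA a ha]) (fun b hb => (mem_range.mp ht).trans_le (hB b hb))
    _ = ∑ e ∈ G.edgeFinset, #{t ∈ range k | CrossesLevel f t e} :=
      sum_card_bipartiteAbove_eq_sum_card_bipartiteBelow _
    _ ≤ ∑ e ∈ G.edgeFinset, w e :=
      sum_le_sum fun e he => card_filter_crossesLevel_le (fun u hu v hv => ?_) k
  rcases eq_or_ne u v with rfl | huv
  · omega
  · obtain rfl := (Sym2.mem_and_mem_iff huv).mp ⟨hu, hv⟩
    exact hw u v (mem_edgeFinset.mp he)

end LevelCuts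

theorem faceNumber_le_of_minCut_general {V : Type*} [Fintype V]
    (G : SimpleGraph V) [DecidableRel G.Adj]
    (A B : Set V)
    (N : ℕ) (F : Equiv.Perm (Fin N))
    (hF : F.IsCycle ∧ F.support = Finset.univ)
    (σmin : Finset (Sym2 V)) (hσ : IsMinEdgeCut G A B σmin)
    (π : V → Equiv.Perm (Fin N))
    (hbdA : ∀ v ∈ A, π v = 1) (hbdB : ∀ v ∈ B, π v = F) :
    ∑ e ∈ G.edgeFinset, numCyclesLift π e
      ≤ N * G.edgeFinset.card - σmin.card * (N - 1) := by
  have hle : ∀ e, numCyclesLift π e ≤ N := fun e => by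
    induction e using Sym2.ind with | _ u v =>
    exact (Nat.le_add_left _ _).trans (swapLength_add_numCycles_le ((π u)⁻¹ * π v))
  have hFlen : N - 1 ≤ swapLength F := by
    have := hF.1.card_le_swapLength_add_one hF.2
    rw [Fintype.card_fin] at this
    omega
  have hcut : #σmin * (N - 1) ≤ ∑ e ∈ G.edgeFinset, (N - numCyclesLift π e) :=
    hσ.card_mul_le_sum (f := fun v => swapLength (π v))
      (fun a ha => by simp [hbdA a ha]) (fun b hb => by simpa [hbdB b hb] using hFlen)
      _ (fun u v _ => swapLength_le_add_sub_numCycles (π u) (π v))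
  rw [sum_tsub_distrib _ fun e _ => hle e, sum_const, smul_eq_mul] at hcut
  have hsum : ∑ e ∈ G.edgeFinset, numCyclesLift π e ≤ #G.edgeFinset * N := by
    simpa using sum_le_card_nsmul G.edgeFinset _ N fun e _ => hle e
  rw [mul_comm N]
  omega

/-- for a finite connected graph with boundary regions `A`, `B`, a
minimum `A`–`B` edge cut `σ_min` of size `m`, and any labeling of the vertices by
permutations in `S_N` equal to `id` on the `A` boundary and to a fixed `N`-cycle
`F` on the `B` boundary, the face number
`Ω̃({π_v}) = ∑_{(u,v) ∈ E} χ(π_u⁻¹ π_v)` satisfies `Ω̃ ≤ N|E| − m(N − 1)`. -/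
theorem faceNumber_le_of_minCut {V : Type*} [Fintype V] [DecidableEq V]
    (G : SimpleGraph V) [DecidableRel G.Adj] (hconn : G.Connected)
    (A B : Set V) (hdisj : Disjoint A B) (hA : A.Nonempty) (hB : B.Nonempty)
    (N : ℕ) (F : Equiv.Perm (Fin N))
    (hF : F.IsCycle ∧ F.support = Finset.univ)
    (σmin : Finset (Sym2 V)) (hσ : IsMinEdgeCut G A B σmin)
    (π : V → Equiv.Perm (Fin N))
    (hbdA : ∀ v ∈ A, π v = 1) (hbdB : ∀ v ∈ B, π v = F) :
    ∑ e ∈ G.edgeFinset, numCyclesLift π e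
      ≤ N * G.edgeFinset.card - σmin.card * (N - 1) :=
  faceNumber_le_of_minCut_general G A B N F hF σmin hσ π hbdA hbdB
end

section
/- With the setup of the previous bound, the labeling that assigns id to every vertex in the component of Γ ∖ σ_min containing A and F to every vertex in the component containing B achieves Ω̃ = N|E| − |σ_min|(N − 1), hence attains the maximum of the face number. -/
/-!
Write `c(π)` for the number of cycles of `π`, fixed points included, so that `N - c(π⁻¹ σ)` is
the Cayley distance. It satisfies the triangle inequality because `c(f)` is the dimension of the
space of functions `Fin N → ℚ` invariant under `f`, and the invariant spaces of `f` and `g` meet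
inside that of `f * g`.

For a labeling `π` satisfying the boundary conditions, every level set `{v | t < c(π v)}` with
`1 ≤ t < N` contains `A` and misses `B`, so at least `|σ_min|` edges leave it. An edge `{u, v}`
leaves at most `|c(π u) - c(π v)| ≤ N - c(π u⁻¹ π v)` of these level sets, and summing over the
levels gives `Ω̃(π) ≤ N |E| - (N - 1) |σ_min|`. For the cut labeling, the edges leaving the
component of `A` form an `A`–`B` cut contained in `σ_min`, hence equal to it by minimality; they
are exactly the edges contributing `c(F) = 1` rather than `N`.
-/

namespace Equiv.Perm

variable {α : Type*}

theorem apply_eq_of_sameCycle {β : Type*} [Finite α] {f : Perm α} {x : α → β} (hx : x ∘ f = x)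
    {a b : α} (hab : f.SameCycle a b) : x a = x b := by
  obtain ⟨n, rfl⟩ := hab.exists_nat_pow_eq
  clear hab
  induction n with
  | zero => rfl
  | succ n ih => rw [ih, pow_succ', mul_apply]; exact (congrFun hx _).symm

variable (K : Type*) [Field K]

def fixedFunctions (f : Perm α) : Submodule K (α → K) :=
  LinearMap.eqLocus (LinearMap.funLeft K K f) LinearMap.id

variable {K}

theorem mem_fixedFunctions {f : Perm α} {x : α → K} : x ∈ fixedFunctions K f ↔ x ∘ f = x :=
  Iff.rfl

theorem fixedFunctions_inf_le_mul (f g : Perm α) :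
    fixedFunctions K f ⊓ fixedFunctions K g ≤ fixedFunctions K (f * g) := by
  rintro x ⟨hf, hg⟩
  rw [SetLike.mem_coe, mem_fixedFunctions] at hf hg
  rw [mem_fixedFunctions, coe_mul, ← Function.comp_assoc, hf, hg]

theorem fixedFunctions_eq_range [Finite α] (f : Perm α) :
    fixedFunctions K f =
      LinearMap.range (LinearMap.funLeft K K (Quotient.mk (SameCycle.setoid f))) := by
  ext x
  rw [mem_fixedFunctions, LinearMap.mem_range]
  constructor
  · intro hx
    exact ⟨Quotient.lift x fun _ _ => apply_eq_of_sameCycle hx, rfl⟩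
  · rintro ⟨y, rfl⟩
    funext a
    exact congrArg y (Quotient.sound (sameCycle_apply_left.mpr (SameCycle.refl f a)))

theorem finrank_fixedFunctions [Finite α] (f : Perm α) :
    Module.finrank K (fixedFunctions K f) = Nat.card (Quotient (SameCycle.setoid f)) := by
  have := Fintype.ofFinite (Quotient (SameCycle.setoid f))
  rw [fixedFunctions_eq_range, LinearMap.finrank_range_of_inj
    (LinearMap.funLeft_injective_of_surjective _ _ _ Quotient.mk_surjective),
    Module.finrank_fintype_fun_eq_card, Nat.card_eq_fintype_card]

theorem card_quotient_sameCycle_add_le [Fintype α] (f g : Perm α) :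
    Nat.card (Quotient (SameCycle.setoid f)) + Nat.card (Quotient (SameCycle.setoid g)) ≤
      Fintype.card α + Nat.card (Quotient (SameCycle.setoid (f * g))) := by
  simp only [← finrank_fixedFunctions (K := ℚ)]
  rw [← Submodule.finrank_sup_add_finrank_inf_eq]
  have hsup := Submodule.finrank_le (fixedFunctions ℚ f ⊔ fixedFunctions ℚ g)
  rw [Module.finrank_fintype_fun_eq_card] at hsup
  have hinf := Submodule.finrank_mono (fixedFunctions_inf_le_mul (K := ℚ) f g)
  omega

theorem card_quotient_sameCycle [Fintype α] [DecidableEq α] (f : Perm α) :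
    Nat.card (Quotient (SameCycle.setoid f)) =
      Fintype.card (Function.fixedPoints f) + f.cycleFactorsFinset.card := by
  have hpt (c : f.cycleFactorsFinset) : c.1.support.Nonempty :=
    (mem_cycleFactorsFinset_iff.mp c.2).1.nonempty_support
  let pt (c : f.cycleFactorsFinset) : α := (hpt c).choose
  have pt_mem (c : f.cycleFactorsFinset) : pt c ∈ c.1.support := (hpt c).choose_spec
  have pt_moved (c : f.cycleFactorsFinset) : ¬ Function.IsFixedPt f (pt c) :=
    mem_support.mp (mem_cycleFactorsFinset_support_le c.2 (pt_mem c))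
  let Φ : Function.fixedPoints f ⊕ f.cycleFactorsFinset → Quotient (SameCycle.setoid f) :=
    Sum.elim (fun x => Quotient.mk _ x.1) (fun c => Quotient.mk _ (pt c))
  have hinj : Function.Injective Φ := by
    refine Function.Injective.sumElim ?_ ?_ ?_
    · intro ⟨x, hx⟩ ⟨y, _⟩ hxy
      exact Subtype.ext ((Quotient.exact hxy).eq_of_left hx)
    · intro c d hcd
      apply Subtype.ext
      rw [cycle_is_cycleOf (pt_mem c) c.2, cycle_is_cycleOf (pt_mem d) d.2]
      exact (Quotient.exact hcd).cycleOf_eq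
    · rintro ⟨x, hx⟩ c hxc
      exact pt_moved c ((Quotient.exact hxc).eq_of_left hx ▸ hx)
  have hsurj : Function.Surjective Φ := by
    rintro ⟨a⟩
    by_cases ha : Function.IsFixedPt f a
    · exact ⟨Sum.inl ⟨a, ha⟩, rfl⟩
    · let c : f.cycleFactorsFinset :=
        ⟨f.cycleOf a, cycleOf_mem_cycleFactorsFinset_iff.mpr (mem_support.mpr ha)⟩
      exact ⟨Sum.inr c, Quotient.sound (mem_support_cycleOf_iff.mp (pt_mem c)).1.symm⟩
  rw [← Nat.card_congr (Equiv.ofBijective Φ ⟨hinj, hsurj⟩), Nat.card_sum,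
    Nat.card_eq_fintype_card, Nat.card_eq_fintype_card, Fintype.card_coe]

end Equiv.Perm

section NumCycles

open Equiv Equiv.Perm

variable {N : ℕ}

theorem numCycles_eq_card_quotient (f : Perm (Fin N)) :
    numCycles f = Nat.card (Quotient (SameCycle.setoid f)) := by
  rw [numCycles, card_quotient_sameCycle, card_fixedPoints, Fintype.card_fin, cycleType_def,
    Multiset.card_map, Finset.card_val]

theorem numCycles_le (f : Perm (Fin N)) : numCycles f ≤ N := by
  rw [numCycles_eq_card_quotient]
  exact (Nat.card_le_card_of_surjective _ Quotient.mk_surjective).trans (Nat.card_fin N).le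

theorem numCycles_add_numCycles_le (f g : Perm (Fin N)) :
    numCycles f + numCycles g ≤ N + numCycles (f * g) := by
  simpa only [numCycles_eq_card_quotient, Fintype.card_fin] using
    card_quotient_sameCycle_add_le f g

@[simp]
theorem numCycles_one : numCycles (1 : Perm (Fin N)) = N := by
  simp [numCycles]

@[simp]
theorem numCycles_inv (f : Perm (Fin N)) : numCycles f⁻¹ = numCycles f := by
  rw [numCycles, numCycles, cycleType_inv]

theorem numCycles_eq_one_of_isCycle {F : Perm (Fin N)} (hF : F.IsCycle)
    (hsupp : F.support = Finset.univ) : numCycles F = 1 := by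
  simp [numCycles, hF.cycleType, hsupp]

theorem numCycles_inv_mul_add_le (p q : Perm (Fin N)) :
    numCycles (p⁻¹ * q) + (max (numCycles p) (numCycles q) - min (numCycles p) (numCycles q))
      ≤ N := by
  have hpq := numCycles_add_numCycles_le p (p⁻¹ * q)
  have hqp := numCycles_add_numCycles_le q (q⁻¹ * p)
  rw [mul_inv_cancel_left] at hpq hqp
  rw [← inv_inv (q⁻¹ * p), mul_inv_rev, inv_inv, numCycles_inv] at hqp
  omega

@[simp]
theorem numCyclesLift_mk {V : Type*} (π : V → Perm (Fin N)) (u v : V) :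
    numCyclesLift π s(u, v) = numCycles ((π u)⁻¹ * π v) :=
  rfl

end NumCycles

def Sym2.Crosses {V : Type*} (e : Sym2 V) (S : Set V) : Prop :=
  ∃ u ∈ e, ∃ v ∈ e, u ∈ S ∧ v ∉ S

theorem Sym2.crosses_mk {V : Type*} {S : Set V} {u v : V} :
    s(u, v).Crosses S ↔ u ∈ S ∧ v ∉ S ∨ v ∈ S ∧ u ∉ S := by
  simp only [Sym2.Crosses, Sym2.mem_iff]
  aesop

open scoped Classical in
theorem card_filter_crosses_levelSet_le {V : Type*} (f : V → ℕ) (s : Finset ℕ) (u v : V) :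
    (s.filter fun t => s(u, v).Crosses {w | t < f w}).card
      ≤ max (f u) (f v) - min (f u) (f v) := by
  refine (Finset.card_le_card fun t ht => ?_).trans (Nat.card_Ico _ _).le
  simp only [Finset.mem_filter, Sym2.crosses_mk, Set.mem_ofPred_eq] at ht
  rw [Finset.mem_Ico]
  omega

namespace SimpleGraph

variable {V : Type*}

def reachableFrom (H : SimpleGraph V) (A : Set V) : Set V :=
  {v | ∃ a ∈ A, H.Reachable a v}

theorem subset_reachableFrom (H : SimpleGraph V) (A : Set V) : A ⊆ H.reachableFrom A :=
  fun a ha => ⟨a, ha, Reachable.refl a⟩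

theorem not_crosses_reachableFrom {H : SimpleGraph V} {A : Set V} {e : Sym2 V}
    (he : e ∈ H.edgeSet) : ¬ e.Crosses (H.reachableFrom A) := by
  induction e using Sym2.ind with
  | _ u v =>
    rw [Sym2.crosses_mk]
    rintro (⟨⟨a, ha, hau⟩, hv⟩ | ⟨⟨a, ha, hav⟩, hu⟩)
    · exact hv ⟨a, ha, hau.trans (Adj.reachable he)⟩
    · exact hu ⟨a, ha, hav.trans (Adj.reachable (H.adj_symm he))⟩

end SimpleGraph

section EdgeCuts

open SimpleGraph

variable {V : Type*} {G : SimpleGraph V} {A B : Set V}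

theorem isEdgeCut_of_crosses {S : Set V} (hA : A ⊆ S) (hB : Disjoint B S)
    {C : Finset (Sym2 V)} (hCG : ↑C ⊆ G.edgeSet)
    (hC : ∀ e ∈ G.edgeSet, e.Crosses S → e ∈ C) : IsEdgeCut G A B C := by
  refine ⟨hCG, fun a ha b hb w => ?_⟩
  obtain ⟨d, hd, hfst, hsnd⟩ := w.exists_boundary_dart S (hA ha) (Set.disjoint_left.mp hB hb)
  exact ⟨d.edge, List.mem_map_of_mem hd, hC _ d.edge_mem
    ⟨d.fst, Sym2.mem_mk_left _ _, d.snd, Sym2.mem_mk_right _ _, hfst, hsnd⟩⟩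

theorem IsEdgeCut.disjoint_reachableFrom {σ : Finset (Sym2 V)} (hσ : IsEdgeCut G A B σ) :
    Disjoint B ((G.deleteEdges σ).reachableFrom A) := by
  rw [Set.disjoint_left]
  rintro b hb ⟨a, ha, ⟨w⟩⟩
  obtain ⟨e, he, heσ⟩ := hσ.2 a ha b hb (w.mapLe (G.deleteEdges_le _))
  rw [Walk.edges_mapLe_eq_edges] at he
  exact (edgeSet_deleteEdges _ ▸ w.edges_subset_edgeSet he).2 heσ

theorem mem_of_crosses_reachableFrom {σ : Finset (Sym2 V)} {e : Sym2 V} (he : e ∈ G.edgeSet)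
    (hcross : e.Crosses ((G.deleteEdges σ).reachableFrom A)) : e ∈ σ := by
  by_contra heσ
  exact not_crosses_reachableFrom (by rw [edgeSet_deleteEdges]; exact ⟨he, heσ⟩) hcross

theorem IsMinEdgeCut.crosses_reachableFrom_iff {σ : Finset (Sym2 V)} (hσ : IsMinEdgeCut G A B σ)
    {e : Sym2 V} (he : e ∈ G.edgeSet) :
    e.Crosses ((G.deleteEdges σ).reachableFrom A) ↔ e ∈ σ := by
  classical
  set R := (G.deleteEdges σ).reachableFrom A
  have hcut : IsEdgeCut G A B (σ.filter (·.Crosses R)) :=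
    isEdgeCut_of_crosses (subset_reachableFrom _ A) (IsEdgeCut.disjoint_reachableFrom hσ.1)
      (fun e he => hσ.1.1 (Finset.mem_of_mem_filter e he))
      fun e he hcross => Finset.mem_filter.mpr ⟨mem_of_crosses_reachableFrom he hcross, hcross⟩
  have hfilter := Finset.eq_of_subset_of_card_le (Finset.filter_subset _ σ) (hσ.2 _ hcut)
  exact ⟨mem_of_crosses_reachableFrom he, fun heσ => (Finset.filter_eq_self.mp hfilter e heσ)⟩

variable {N : ℕ} {σ : Finset (Sym2 V)} {F : Equiv.Perm (Fin N)}

theorem cutLabel_of_mem {v : V} (hv : v ∈ (G.deleteEdges σ).reachableFrom A) :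
    cutLabel G σ A F v = 1 :=
  if_pos hv

theorem cutLabel_of_notMem {v : V} (hv : v ∉ (G.deleteEdges σ).reachableFrom A) :
    cutLabel G σ A F v = F :=
  if_neg hv

theorem numCyclesLift_cutLabel_add [DecidableEq V] (hσ : IsMinEdgeCut G A B σ)
    (hF : numCycles F = 1) {e : Sym2 V} (he : e ∈ G.edgeSet) :
    numCyclesLift (cutLabel G σ A F) e + (if e ∈ σ then N - 1 else 0) = N := by
  have hN : 1 ≤ N := hF ▸ numCycles_le F
  induction e using Sym2.ind with
  | _ u v =>
    have hcross := hσ.crosses_reachableFrom_iff he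
    rw [Sym2.crosses_mk] at hcross
    by_cases hu : u ∈ (G.deleteEdges σ).reachableFrom A <;>
    by_cases hv : v ∈ (G.deleteEdges σ).reachableFrom A <;>
    simp only [hu, hv, and_true, not_true, not_false_eq_true, and_false, or_false, false_or,
      true_iff, false_iff] at hcross <;>
    simp [hcross, hu, hv, cutLabel_of_mem, cutLabel_of_notMem, hF] <;>
    omega

theorem sum_numCyclesLift_cutLabel_add [Fintype G.edgeSet] (hσ : IsMinEdgeCut G A B σ)
    (hF : numCycles F = 1) :
    ∑ e ∈ G.edgeFinset, numCyclesLift (cutLabel G σ A F) e + σ.card * (N - 1)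
      = N * G.edgeFinset.card := by
  classical
  have hσE : σ ⊆ G.edgeFinset := fun e he => Set.mem_toFinset.mpr (hσ.1.1 he)
  calc ∑ e ∈ G.edgeFinset, numCyclesLift (cutLabel G σ A F) e + σ.card * (N - 1)
      = ∑ e ∈ G.edgeFinset,
          (numCyclesLift (cutLabel G σ A F) e + if e ∈ σ then N - 1 else 0) := by
        rw [Finset.sum_add_distrib, Finset.sum_ite_mem, Finset.inter_eq_right.mpr hσE,
          Finset.sum_const, smul_eq_mul]
    _ = ∑ _e ∈ G.edgeFinset, N :=
        Finset.sum_congr rfl fun e he =>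
          numCyclesLift_cutLabel_add hσ hF (G.mem_edgeFinset.mp he)
    _ = N * G.edgeFinset.card := by rw [Finset.sum_const, smul_eq_mul, mul_comm]

theorem sum_numCyclesLift_add_le [Fintype G.edgeSet]
    (hmin : ∀ σ' : Finset (Sym2 V), IsEdgeCut G A B σ' → σ.card ≤ σ'.card)
    (π : V → Equiv.Perm (Fin N)) (hπA : ∀ v ∈ A, numCycles (π v) = N)
    (hπB : ∀ v ∈ B, numCycles (π v) = 1) :
    ∑ e ∈ G.edgeFinset, numCyclesLift π e + σ.card * (N - 1) ≤ N * G.edgeFinset.card := by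
  classical
  let level (t : ℕ) : Set V := {w | t < numCycles (π w)}
  have hlevel_cut : ∀ t ∈ Finset.Ico 1 N,
      σ.card ≤ (G.edgeFinset.filter (·.Crosses (level t))).card := by
    intro t ht
    rw [Finset.mem_Ico] at ht
    refine hmin _ (isEdgeCut_of_crosses (fun a ha => ?_) (Set.disjoint_left.mpr fun b hb => ?_)
      (fun e he => G.mem_edgeFinset.mp (Finset.mem_of_mem_filter e he))
      (fun e he hcross => Finset.mem_filter.mpr ⟨G.mem_edgeFinset.mpr he, hcross⟩))
    · show t < numCycles (π a)
      rw [hπA a ha]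
      exact ht.2
    · show ¬ t < numCycles (π b)
      rw [hπB b hb]
      omega
  have hedge : ∀ e ∈ G.edgeFinset,
      numCyclesLift π e + ((Finset.Ico 1 N).filter (e.Crosses <| level ·)).card ≤ N := by
    intro e _
    induction e using Sym2.ind with
    | _ u v =>
      exact (Nat.add_le_add_left (card_filter_crosses_levelSet_le _ _ u v) _).trans
        (numCycles_inv_mul_add_le (π u) (π v))
  calc ∑ e ∈ G.edgeFinset, numCyclesLift π e + σ.card * (N - 1)
      = ∑ e ∈ G.edgeFinset, numCyclesLift π e + ∑ _t ∈ Finset.Ico 1 N, σ.card := by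
        rw [Finset.sum_const, Nat.card_Ico, smul_eq_mul, mul_comm]
    _ ≤ ∑ e ∈ G.edgeFinset, numCyclesLift π e
          + ∑ t ∈ Finset.Ico 1 N, (G.edgeFinset.filter (·.Crosses (level t))).card :=
        Nat.add_le_add_left (Finset.sum_le_sum hlevel_cut) _
    _ = ∑ e ∈ G.edgeFinset, numCyclesLift π e
          + ∑ e ∈ G.edgeFinset, ((Finset.Ico 1 N).filter (e.Crosses <| level ·)).card := by
        congr 1
        exact Finset.sum_card_bipartiteAbove_eq_sum_card_bipartiteBelow
          (r := fun t (e : Sym2 V) => e.Crosses (level t))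
    _ = ∑ e ∈ G.edgeFinset,
          (numCyclesLift π e + ((Finset.Ico 1 N).filter (e.Crosses <| level ·)).card) :=
        Finset.sum_add_distrib.symm
    _ ≤ ∑ _e ∈ G.edgeFinset, N := Finset.sum_le_sum hedge
    _ = N * G.edgeFinset.card := by rw [Finset.sum_const, smul_eq_mul, mul_comm]

end EdgeCuts

theorem faceNumber_cutLabel_max_general {V : Type*} [Fintype V]
    (G : SimpleGraph V) [DecidableRel G.Adj]
    (A B : Set V)
    (N : ℕ) (F : Equiv.Perm (Fin N))
    (hF : F.IsCycle ∧ F.support = Finset.univ)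
    (σmin : Finset (Sym2 V)) (hσ : IsMinEdgeCut G A B σmin) :
    ∑ e ∈ G.edgeFinset, numCyclesLift (cutLabel G σmin A F) e
        = N * G.edgeFinset.card - σmin.card * (N - 1) ∧
    ∀ π : V → Equiv.Perm (Fin N),
      (∀ v ∈ A, π v = 1) → (∀ v ∈ B, π v = F) →
      ∑ e ∈ G.edgeFinset, numCyclesLift π e
        ≤ ∑ e ∈ G.edgeFinset, numCyclesLift (cutLabel G σmin A F) e := by
  have hF1 : numCycles F = 1 := numCycles_eq_one_of_isCycle hF.1 hF.2
  have hcutLabel := Nat.eq_sub_of_add_eq (sum_numCyclesLift_cutLabel_add hσ hF1)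
  refine ⟨hcutLabel, fun π hπA hπB => hcutLabel ▸ Nat.le_sub_of_add_le ?_⟩
  exact sum_numCyclesLift_add_le hσ.2 π (fun v hv => by rw [hπA v hv, numCycles_one])
    (fun v hv => by rw [hπB v hv, hF1])

/-- the labeling assigning `id` to every vertex in the component of
`Γ ∖ σ_min` connected to `A` and the `N`-cycle `F` to every other vertex (in
particular the component connected to `B`) achieves
`Ω̃ = N|E| − |σ_min|(N − 1)`, hence attains the maximum of the face number among
all labelings satisfying the boundary conditions. -/
theorem faceNumber_cutLabel_max {V : Type*} [Fintype V] [DecidableEq V]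
    (G : SimpleGraph V) [DecidableRel G.Adj] (hconn : G.Connected)
    (A B : Set V) (hdisj : Disjoint A B) (hA : A.Nonempty) (hB : B.Nonempty)
    (N : ℕ) (F : Equiv.Perm (Fin N))
    (hF : F.IsCycle ∧ F.support = Finset.univ)
    (σmin : Finset (Sym2 V)) (hσ : IsMinEdgeCut G A B σmin) :
    ∑ e ∈ G.edgeFinset, numCyclesLift (cutLabel G σmin A F) e
        = N * G.edgeFinset.card - σmin.card * (N - 1) ∧
    ∀ π : V → Equiv.Perm (Fin N),
      (∀ v ∈ A, π v = 1) → (∀ v ∈ B, π v = F) →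
      ∑ e ∈ G.edgeFinset, numCyclesLift π e
        ≤ ∑ e ∈ G.edgeFinset, numCyclesLift (cutLabel G σmin A F) e :=
  faceNumber_cutLabel_max_general G A B N F hF σmin hσ
end

section
/- Let π̄ ∈ S_N, N ≥ 2, and let F₂ ∈ S_N denote the transposition of positions 1 and 2. For any π₁, π₂, π₃ ∈ S_N, define the interacting face count Ω̃_int = χ(π̄ π₁⁻¹) + χ((F₂ ∘ π̄) π₂⁻¹) + χ'(π̄, π₃) where χ'(π̄,π₃) counts the cycles of π̄ π₃⁻¹ after merging positions 1 and 2 (decreasing the count by 1 if positions 1 and 2 are in distinct cycles of π̄π₃⁻¹, leaving it if they are in the same cycle, as a model of the index-3 interaction strand structure). Then there exists a choice π ∈ {π̄, F₂ ∘ π̄} such that the free face count χ(π π₁⁻¹) + χ(π π₂⁻¹) + χ(π π₃⁻¹) is at least Ω̃_int. -/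
namespace FaceProofAux

open Equiv Equiv.Perm

open scoped Classical

variable {N : ℕ}

/-- The number of `SameCycle` equivalence classes. -/
noncomputable def nc (σ : Equiv.Perm (Fin N)) : ℕ :=
  Nat.card (Quotient (Equiv.Perm.SameCycle.setoid σ))

lemma eq_of_sameCycle_fixed {σ : Equiv.Perm (Fin N)} {x y : Fin N}
    (hx : σ x = x) (h : σ.SameCycle x y) : y = x := by
  obtain ⟨i, hi⟩ := h
  rw [Equiv.Perm.zpow_apply_eq_self_of_apply_eq_self hx i] at hi
  exact hi.symm

/-- classification map for classes: fixed points or cycle factors. -/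
noncomputable def pt (σ : Equiv.Perm (Fin N)) (x : Fin N) :
    {x : Fin N // σ x = x} ⊕ {c : Equiv.Perm (Fin N) // c ∈ σ.cycleFactorsFinset} :=
  if h : σ x = x then Sum.inl ⟨x, h⟩
  else Sum.inr ⟨σ.cycleOf x,
    Equiv.Perm.cycleOf_mem_cycleFactorsFinset_iff.2 (Equiv.Perm.mem_support.2 h)⟩

lemma pt_wd (σ : Equiv.Perm (Fin N)) {x y : Fin N} (h : σ.SameCycle x y) :
    pt σ x = pt σ y := by
  by_cases hx : σ x = x
  · obtain rfl := eq_of_sameCycle_fixed hx h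
    rfl
  · have hy : σ y ≠ y := fun hy => hx (eq_of_sameCycle_fixed hy h.symm ▸ hy)
    rw [pt, pt, dif_neg hx, dif_neg hy]
    exact congrArg _ (Subtype.ext h.cycleOf_eq)

lemma pt_inj (σ : Equiv.Perm (Fin N)) {x y : Fin N} (h : pt σ x = pt σ y) :
    σ.SameCycle x y := by
  by_cases hx : σ x = x <;> by_cases hy : σ y = y <;>
    rw [pt, pt] at h <;> simp [dif_pos, dif_neg, hx, hy] at h
  · exact h ▸ Equiv.Perm.SameCycle.refl σ x
  · -- cycleOf σ x = cycleOf σ y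
    have hne : σ.cycleOf x y ≠ y := by rw [h, Equiv.Perm.cycleOf_apply_self]; exact hy
    by_contra hc
    exact hne (Equiv.Perm.cycleOf_apply_of_not_sameCycle hc)

lemma pt_surj (σ : Equiv.Perm (Fin N)) :
    Function.Surjective (pt σ) := by
  rintro (⟨x, hx⟩ | ⟨c, hc⟩)
  · exact ⟨x, by rw [pt, dif_pos hx]⟩
  · have hc' := Equiv.Perm.mem_cycleFactorsFinset_iff.mp hc
    obtain ⟨x, hx1, -⟩ := hc'.1
    have hxs : x ∈ c.support := Equiv.Perm.mem_support.2 hx1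
    have hσx : σ x ≠ x := by rw [← hc'.2 x hxs]; exact hx1
    refine ⟨x, ?_⟩
    rw [pt, dif_neg hσx]
    exact congrArg _ (Subtype.ext (Equiv.Perm.cycle_is_cycleOf hxs hc).symm)

lemma numCycles_eq_nc (σ : Equiv.Perm (Fin N)) : numCycles σ = nc σ := by
  have hbij : Function.Bijective
      (Quotient.lift (pt σ) (fun x y h => pt_wd σ h) :
        Quotient (Equiv.Perm.SameCycle.setoid σ) → _) := by
    constructor
    · intro q1 q2
      refine Quotient.inductionOn₂ q1 q2 (fun x y h => Quotient.sound ?_)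
      exact pt_inj σ h
    · intro z
      obtain ⟨x, hx⟩ := pt_surj σ z
      exact ⟨Quotient.mk _ x, hx⟩
  have hcard : nc σ = Nat.card ({x : Fin N // σ x = x} ⊕
      {c : Equiv.Perm (Fin N) // c ∈ σ.cycleFactorsFinset}) :=
    Nat.card_eq_of_bijective _ hbij
  have hfix : Nat.card {x : Fin N // σ x = x} = N - σ.cycleType.sum := by
    rw [Nat.card_eq_fintype_card]
    have h1 : Fintype.card {x : Fin N // σ x = x}
        = Fintype.card (Function.fixedPoints σ) := by
      apply Fintype.card_congr
      exact Equiv.subtypeEquivRight (fun x => Iff.rfl)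
    rw [h1, Equiv.Perm.card_fixedPoints, Fintype.card_fin]
  have hfac : Nat.card {c : Equiv.Perm (Fin N) // c ∈ σ.cycleFactorsFinset}
      = Multiset.card σ.cycleType := by
    rw [Nat.card_eq_fintype_card, Fintype.card_coe, Equiv.Perm.cycleType_def]
    simp
  rw [numCycles, hcard, Nat.card_sum, hfix, hfac]

/-- The join relation: `SameCycle σ` joined with the pair `(a, b)`. -/
def tset (σ : Equiv.Perm (Fin N)) (a b : Fin N) : Setoid (Fin N) where
  r x y := σ.SameCycle x y ∨ (σ.SameCycle x a ∧ σ.SameCycle b y)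
    ∨ (σ.SameCycle x b ∧ σ.SameCycle a y)
  iseqv := by
    constructor
    · exact fun x => Or.inl (Equiv.Perm.SameCycle.refl σ x)
    · rintro x y (h | ⟨h1, h2⟩ | ⟨h1, h2⟩)
      · exact Or.inl h.symm
      · exact Or.inr (Or.inr ⟨h2.symm, h1.symm⟩)
      · exact Or.inr (Or.inl ⟨h2.symm, h1.symm⟩)
    · rintro x y z (h | ⟨h1, h2⟩ | ⟨h1, h2⟩) (g | ⟨g1, g2⟩ | ⟨g1, g2⟩)
      · exact Or.inl (h.trans g)
      · exact Or.inr (Or.inl ⟨h.trans g1, g2⟩)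
      · exact Or.inr (Or.inr ⟨h.trans g1, g2⟩)
      · exact Or.inr (Or.inl ⟨h1, h2.trans g⟩)
      · exact Or.inl ((h1.trans (h2.trans g1).symm).trans g2)
      · exact Or.inl (h1.trans g2)
      · exact Or.inr (Or.inr ⟨h1, h2.trans g⟩)
      · exact Or.inl (h1.trans g2)
      · exact Or.inl ((h1.trans (h2.trans g1).symm).trans g2)

lemma sameCycle_swap_mul_le (σ : Equiv.Perm (Fin N)) (a b : Fin N) {x y : Fin N}
    (h : (Equiv.swap a b * σ).SameCycle x y) : (tset σ a b).r x y := by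
  obtain ⟨n, -, rfl⟩ := h.exists_pow_eq'
  clear h
  induction n with
  | zero =>
    rw [pow_zero, Equiv.Perm.one_apply]
  | succ n ih =>
    refine (tset σ a b).iseqv.trans ih ?_
    set z := ((Equiv.swap a b * σ) ^ n) x with hz
    have hstep : ((Equiv.swap a b * σ) ^ (n + 1)) x = Equiv.swap a b (σ z) := by
      rw [pow_succ' (Equiv.swap a b * σ) n]
      rfl
    rw [hstep]
    by_cases hza : σ z = a
    · rw [hza, Equiv.swap_apply_left]
      exact Or.inr (Or.inl ⟨⟨1, by simpa using hza⟩, Equiv.Perm.SameCycle.refl σ b⟩)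
    · by_cases hzb : σ z = b
      · rw [hzb, Equiv.swap_apply_right]
        exact Or.inr (Or.inr ⟨⟨1, by simpa using hzb⟩, Equiv.Perm.SameCycle.refl σ a⟩)
      · rw [Equiv.swap_apply_of_ne_of_ne hza hzb]
        exact Or.inl ⟨1, by simp⟩

lemma card_quot_le {r r' : Setoid (Fin N)} (h : ∀ x y, r.r x y → r'.r x y) :
    Nat.card (Quotient r') ≤ Nat.card (Quotient r) := by
  apply Nat.card_le_card_of_surjective
    (fun q => Quotient.liftOn q (fun x => Quotient.mk r' x)
      (fun x y hxy => Quotient.sound (h x y hxy)))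
  intro q
  induction q using Quotient.ind with
  | _ x => exact ⟨Quotient.mk r x, rfl⟩

lemma nat_card_option (β : Type*) [Finite β] : Nat.card (Option β) = Nat.card β + 1 := by
  haveI : Fintype β := Fintype.ofFinite β
  rw [Nat.card_eq_fintype_card, Nat.card_eq_fintype_card, Fintype.card_option]

lemma card_quot_sameCycle_le (σ : Equiv.Perm (Fin N)) (a b : Fin N) :
    nc σ ≤ Nat.card (Quotient (tset σ a b)) + 1 := by
  have hwd : ∀ x y : Fin N, σ.SameCycle x y →
      (if σ.SameCycle x b then (none : Option (Quotient (tset σ a b)))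
        else some (Quotient.mk (tset σ a b) x))
      = (if σ.SameCycle y b then none else some (Quotient.mk (tset σ a b) y)) := by
    intro x y hxy
    by_cases hxb : σ.SameCycle x b
    · rw [if_pos hxb, if_pos (hxy.symm.trans hxb)]
    · rw [if_neg hxb, if_neg (fun hyb => hxb (hxy.trans hyb))]
      exact congrArg _ (Quotient.sound (Or.inl hxy))
  have hinj : Function.Injective
      (Quotient.lift _ hwd : Quotient (Equiv.Perm.SameCycle.setoid σ) → _) := by
    intro q1 q2
    refine Quotient.inductionOn₂ q1 q2 (fun x y h => Quotient.sound ?_)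
    by_cases hxb : σ.SameCycle x b <;> by_cases hyb : σ.SameCycle y b <;>
      simp only [Quotient.lift_mk, hxb, hyb, if_true, if_false,
        Option.some.injEq, reduceCtorEq] at h
    · exact hxb.trans hyb.symm
    · rcases Quotient.exact h with hs | ⟨h1, h2⟩ | ⟨h1, h2⟩
      · exact hs
      · exact absurd h2.symm hyb
      · exact absurd h1 hxb
  have := Nat.card_le_card_of_injective _ hinj
  rwa [nat_card_option] at this

lemma nc_swap_mul_le (σ : Equiv.Perm (Fin N)) (a b : Fin N) :
    nc (Equiv.swap a b * σ) ≤ nc σ + 1 := by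
  refine le_trans (card_quot_sameCycle_le (Equiv.swap a b * σ) a b) ?_
  refine Nat.add_le_add_right (card_quot_le ?_) 1
  intro x y hxy
  refine sameCycle_swap_mul_le (Equiv.swap a b * σ) a b ?_
  rwa [Equiv.swap_mul_self_mul]

lemma nc_le_of_sameCycle {σ : Equiv.Perm (Fin N)} {a b : Fin N}
    (h : σ.SameCycle a b) : nc σ ≤ nc (Equiv.swap a b * σ) := by
  refine card_quot_le ?_
  intro x y hxy
  rcases sameCycle_swap_mul_le σ a b hxy with hs | ⟨h1, h2⟩ | ⟨h1, h2⟩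
  · exact hs
  · exact (h1.trans h).trans h2
  · exact (h1.trans h.symm).trans h2

lemma numCycles_parity (τ : Equiv.Perm (Fin N)) :
    numCycles τ + 2 * τ.cycleType.sum
      = N + (τ.cycleType.sum + Multiset.card τ.cycleType) := by
  have hs : τ.cycleType.sum ≤ N := by
    rw [Equiv.Perm.sum_cycleType]
    simpa using Finset.card_le_univ τ.support
  rw [numCycles]
  omega

lemma numCycles_swap_mul_ne {σ : Equiv.Perm (Fin N)} {a b : Fin N} (hab : a ≠ b) :
    numCycles (Equiv.swap a b * σ) ≠ numCycles σ := by
  set τ := Equiv.swap a b * σ with hτ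
  have hsign : Equiv.Perm.sign τ = -Equiv.Perm.sign σ := by
    rw [hτ, Equiv.Perm.sign_mul, Equiv.Perm.sign_swap hab, neg_one_mul]
  set e1 := τ.cycleType.sum + Multiset.card τ.cycleType
  set e2 := σ.cycleType.sum + Multiset.card σ.cycleType
  have hpow : (-1 : ℤˣ) ^ (e1 + e2) = -1 := by
    have h1 : (-1 : ℤˣ) ^ e1 = -((-1 : ℤˣ) ^ e2) := by
      rw [← Equiv.Perm.sign_of_cycleType, ← Equiv.Perm.sign_of_cycleType, hsign]
    rw [pow_add, h1, neg_mul, ← sq, Int.units_sq]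
  have hodd : Odd (e1 + e2) := by
    by_contra hev
    rw [Nat.not_odd_iff_even] at hev
    rw [hev.neg_one_pow] at hpow
    exact absurd hpow (by decide)
  obtain ⟨k, hk⟩ := hodd
  intro heq
  have h1 := numCycles_parity τ
  have h2 := numCycles_parity σ
  omega

lemma numCycles_swap_mul_le (σ : Equiv.Perm (Fin N)) (a b : Fin N) :
    numCycles (Equiv.swap a b * σ) ≤ numCycles σ + 1 := by
  rw [numCycles_eq_nc, numCycles_eq_nc]
  exact nc_swap_mul_le σ a b

lemma numCycles_le_swap_mul (σ : Equiv.Perm (Fin N)) (a b : Fin N) :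
    numCycles σ ≤ numCycles (Equiv.swap a b * σ) + 1 := by
  have := numCycles_swap_mul_le (Equiv.swap a b * σ) a b
  rwa [Equiv.swap_mul_self_mul] at this

lemma numCycles_swap_mul_of_sameCycle {σ : Equiv.Perm (Fin N)} {a b : Fin N}
    (hab : a ≠ b) (h : σ.SameCycle a b) :
    numCycles (Equiv.swap a b * σ) = numCycles σ + 1 := by
  have h1 : numCycles σ ≤ numCycles (Equiv.swap a b * σ) := by
    rw [numCycles_eq_nc, numCycles_eq_nc]; exact nc_le_of_sameCycle h
  have h2 := numCycles_swap_mul_le σ a b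
  have h3 := numCycles_swap_mul_ne (σ := σ) hab
  omega

lemma one_le_numCycles (hN : 1 ≤ N) (σ : Equiv.Perm (Fin N)) : 1 ≤ numCycles σ := by
  rw [numCycles_eq_nc, nc]
  haveI : Nonempty (Fin N) := ⟨⟨0, hN⟩⟩
  haveI : Nonempty (Quotient (Equiv.Perm.SameCycle.setoid σ)) :=
    Nonempty.map (Quotient.mk _) inferInstance
  exact Nat.card_pos

end FaceProofAux

open scoped Classical in
/-- with `F₂` the transposition of positions 1 and 2 and
`χ'(π̄, π₃)` the cycle count of `π̄π₃⁻¹` after merging positions 1 and 2 (one less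
than `χ(π̄π₃⁻¹)` if the two positions are in distinct cycles, equal to it if they
are in the same cycle), the interacting face count
`Ω̃_int = χ(π̄π₁⁻¹) + χ((F₂∘π̄)π₂⁻¹) + χ'(π̄,π₃)` is dominated by the free face
count of one of the two free propagations `π ∈ {π̄, F₂∘π̄}`:
`Ω̃_int ≤ χ(ππ₁⁻¹) + χ(ππ₂⁻¹) + χ(ππ₃⁻¹)`. -/
theorem interaction_does_not_increase_faceNumber (N : ℕ) (hN : 2 ≤ N)
    (pbar p1 p2 p3 : Equiv.Perm (Fin N)) :
    ∃ π ∈ ({pbar, Equiv.swap (⟨0, by omega⟩ : Fin N) ⟨1, by omega⟩ * pbar} :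
        Set (Equiv.Perm (Fin N))),
      numCycles (pbar * p1⁻¹)
        + numCycles ((Equiv.swap (⟨0, by omega⟩ : Fin N) ⟨1, by omega⟩ * pbar) * p2⁻¹)
        + (if (pbar * p3⁻¹).SameCycle (⟨0, by omega⟩ : Fin N) ⟨1, by omega⟩
            then numCycles (pbar * p3⁻¹)
            else numCycles (pbar * p3⁻¹) - 1)
      ≤ numCycles (π * p1⁻¹) + numCycles (π * p2⁻¹) + numCycles (π * p3⁻¹) := by
  set a : Fin N := ⟨0, by omega⟩
  set b : Fin N := ⟨1, by omega⟩
  have hab : a ≠ b := by simp [a, b, Fin.ext_iff]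
  by_cases h : (pbar * p3⁻¹).SameCycle a b
  · refine ⟨Equiv.swap a b * pbar, Or.inr rfl, ?_⟩
    rw [if_pos h]
    have hA : numCycles (pbar * p1⁻¹)
        ≤ numCycles (Equiv.swap a b * pbar * p1⁻¹) + 1 := by
      rw [mul_assoc]
      exact FaceProofAux.numCycles_le_swap_mul (pbar * p1⁻¹) a b
    have hC : numCycles (Equiv.swap a b * pbar * p3⁻¹)
        = numCycles (pbar * p3⁻¹) + 1 := by
      rw [mul_assoc]
      exact FaceProofAux.numCycles_swap_mul_of_sameCycle hab h
    omega
  · refine ⟨pbar, Or.inl rfl, ?_⟩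
    rw [if_neg h]
    have hB : numCycles (Equiv.swap a b * pbar * p2⁻¹)
        ≤ numCycles (pbar * p2⁻¹) + 1 := by
      rw [mul_assoc]
      exact FaceProofAux.numCycles_swap_mul_le (pbar * p2⁻¹) a b
    have h3 : 1 ≤ numCycles (pbar * p3⁻¹) :=
      FaceProofAux.one_le_numCycles (by omega) _
    omega
end
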